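/- Let θ be a smooth positive solution of θ_t - θ_xx = μ θ u_tx on (0,T)×(a,b) with u(·,a)=u(·,b)=0 and θ_x(·,a)=θ_x(·,b)=0, and let τ = log θ. Then d/dt ∫_a^b τ dx = ∫_a^b τ_x² dx for all t ∈ (0,T). In particular, t ↦ ∫_a^b log θ(t,x) dx is non-decreasing (the second principle of thermodynamics). -/

import Mathlib

/-- Partial derivative in time (first variable). -/
noncomputable def pt (f : ℝ → ℝ → ℝ) : ℝ → ℝ → ℝ := fun t x => deriv (fun s => f s x) t

/-- Partial derivative in space (second variable). -/
noncomputable def px (f : ℝ → ℝ → ℝ) : ℝ → ℝ → ℝ := fun t x => deriv (fun y => f t y) x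

open MeasureTheory Set

theorem hasDerivAt_pt {f : ℝ → ℝ → ℝ} (hf : ContDiff ℝ (⊤ : ℕ∞) (Function.uncurry f)) (t x : ℝ) :
    HasDerivAt (fun s => f s x) (pt f t x) t := by
  have h1 : HasDerivAt (fun s : ℝ => (s, x)) ((1 : ℝ), (0 : ℝ)) t :=
    (hasDerivAt_id t).prodMk (hasDerivAt_const t x)
  have h2 := ((hf.differentiable (by simp) (t, x)).hasFDerivAt).comp_hasDerivAt t h1
  have h3 : (Function.uncurry f ∘ fun s : ℝ => (s, x)) = fun s => f s x := rfl
  rw [h3] at h2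
  have : pt f t x = fderiv ℝ (Function.uncurry f) (t, x) (1, 0) := h2.deriv
  rw [this]; exact h2

theorem pt_eq_fderiv {f : ℝ → ℝ → ℝ} (hf : ContDiff ℝ (⊤ : ℕ∞) (Function.uncurry f)) (t x : ℝ) :
    pt f t x = fderiv ℝ (Function.uncurry f) (t, x) ((1 : ℝ), (0 : ℝ)) := by
  have h1 : HasDerivAt (fun s : ℝ => (s, x)) ((1 : ℝ), (0 : ℝ)) t :=
    (hasDerivAt_id t).prodMk (hasDerivAt_const t x)
  have h2 := ((hf.differentiable (by simp) (t, x)).hasFDerivAt).comp_hasDerivAt t h1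
  exact h2.deriv

theorem hasDerivAt_px {f : ℝ → ℝ → ℝ} (hf : ContDiff ℝ (⊤ : ℕ∞) (Function.uncurry f)) (t x : ℝ) :
    HasDerivAt (fun y => f t y) (px f t x) x := by
  have h1 : HasDerivAt (fun y : ℝ => (t, y)) ((0 : ℝ), (1 : ℝ)) x :=
    (hasDerivAt_const x t).prodMk (hasDerivAt_id x)
  have h2 := ((hf.differentiable (by simp) (t, x)).hasFDerivAt).comp_hasDerivAt x h1
  have h3 : (Function.uncurry f ∘ fun y : ℝ => (t, y)) = fun y => f t y := rfl
  rw [h3] at h2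
  have : px f t x = fderiv ℝ (Function.uncurry f) (t, x) (0, 1) := h2.deriv
  rw [px]; rw [show deriv (fun y => f t y) x = fderiv ℝ (Function.uncurry f) (t, x) (0,1) from h2.deriv]
  exact h2

theorem px_eq_fderiv {f : ℝ → ℝ → ℝ} (hf : ContDiff ℝ (⊤ : ℕ∞) (Function.uncurry f)) (t x : ℝ) :
    px f t x = fderiv ℝ (Function.uncurry f) (t, x) ((0 : ℝ), (1 : ℝ)) := by
  have h1 : HasDerivAt (fun y : ℝ => (t, y)) ((0 : ℝ), (1 : ℝ)) x :=
    (hasDerivAt_const x t).prodMk (hasDerivAt_id x)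
  exact (((hf.differentiable (by simp) (t, x)).hasFDerivAt).comp_hasDerivAt x h1).deriv

theorem contDiff_pt {f : ℝ → ℝ → ℝ} (hf : ContDiff ℝ (⊤ : ℕ∞) (Function.uncurry f)) :
    ContDiff ℝ (⊤ : ℕ∞) (Function.uncurry (pt f)) := by
  have : Function.uncurry (pt f) =
      fun p : ℝ × ℝ => fderiv ℝ (Function.uncurry f) p ((1 : ℝ), (0 : ℝ)) := by
    funext p; exact pt_eq_fderiv hf p.1 p.2
  rw [this]
  exact (hf.fderiv_right (by simp)).clm_apply contDiff_const

theorem contDiff_px {f : ℝ → ℝ → ℝ} (hf : ContDiff ℝ (⊤ : ℕ∞) (Function.uncurry f)) :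
    ContDiff ℝ (⊤ : ℕ∞) (Function.uncurry (px f)) := by
  have : Function.uncurry (px f) =
      fun p : ℝ × ℝ => fderiv ℝ (Function.uncurry f) p ((0 : ℝ), (1 : ℝ)) := by
    funext p; exact px_eq_fderiv hf p.1 p.2
  rw [this]
  exact (hf.fderiv_right (by simp)).clm_apply contDiff_const

theorem stmt_8 (a b T μ : ℝ) (hab : a < b) (hT : 0 < T)
    (u θ : ℝ → ℝ → ℝ)
    (hu : ContDiff ℝ (⊤ : ℕ∞) (Function.uncurry u)) (hθ : ContDiff ℝ (⊤ : ℕ∞) (Function.uncurry θ))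
    (hpos : ∀ t x, 0 < θ t x)
    (heq : ∀ t ∈ Set.Ioo 0 T, ∀ x ∈ Set.Ioo a b,
      pt θ t x - px (px θ) t x = μ * θ t x * px (pt u) t x)
    (hbcu : ∀ t ∈ Set.Icc 0 T, u t a = 0 ∧ u t b = 0)
    (hbcθ : ∀ t ∈ Set.Icc 0 T, px θ t a = 0 ∧ px θ t b = 0)
    (τ : ℝ → ℝ → ℝ) (hτ : τ = fun t x => Real.log (θ t x)) :
    (∀ t ∈ Set.Ioo 0 T,
      deriv (fun s => ∫ x in a..b, τ s x) t = ∫ x in a..b, (px τ t x) ^ 2) ∧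
    MonotoneOn (fun t => ∫ x in a..b, Real.log (θ t x)) (Set.Icc 0 T) := by
  -- smoothness of τ
  have hτs : ContDiff ℝ (⊤ : ℕ∞) (Function.uncurry τ) := by
    rw [hτ, contDiff_iff_contDiffAt]
    intro p
    exact (Real.contDiffAt_log.mpr (hpos p.1 p.2).ne').comp p hθ.contDiffAt
  -- helper: continuity of slices
  have contx : ∀ (g : ℝ → ℝ → ℝ), ContDiff ℝ (⊤ : ℕ∞) (Function.uncurry g) → ∀ t,
      Continuous (fun x => g t x) := fun g hg t =>
    hg.continuous.comp (continuous_const.prodMk continuous_id)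
  -- A : pt τ = pt θ / θ
  have A : ∀ t x, pt τ t x = pt θ t x / θ t x := by
    intro t x
    have h := (Real.hasDerivAt_log (hpos t x).ne').comp t (hasDerivAt_pt hθ t x)
    have h2 : (fun s => τ s x) = (Real.log ∘ fun s => θ s x) := by
      funext s; simp [hτ]
    have : pt τ t x = (θ t x)⁻¹ * pt θ t x := by
      rw [pt]; rw [h2]; exact h.deriv
    rw [this]; ring
  -- B : px τ = px θ / θ
  have B : ∀ t x, px τ t x = px θ t x / θ t x := by
    intro t x
    have h := (Real.hasDerivAt_log (hpos t x).ne').comp x (hasDerivAt_px hθ t x)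
    have h2 : (fun y => τ t y) = (Real.log ∘ fun y => θ t y) := by
      funext y; simp [hτ]
    have : px τ t x = (θ t x)⁻¹ * px θ t x := by
      rw [px]; rw [h2]; exact h.deriv
    rw [this]; ring
  -- C : second space derivative of τ
  have C : ∀ t x, px (px τ) t x =
      (px (px θ) t x * θ t x - px θ t x * px θ t x) / (θ t x) ^ 2 := by
    intro t x
    have hfun : (fun y => px τ t y) = fun y => px θ t y / θ t y := funext fun y => B t y
    have h := (hasDerivAt_px (contDiff_px hθ) t x).div (hasDerivAt_px hθ t x) (hpos t x).ne'
    have : px (px τ) t x = deriv (fun y => px θ t y / θ t y) x := by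
      rw [px, hfun]
    rw [this]; exact h.deriv
  -- D : main pointwise identity
  have D : ∀ t ∈ Set.Ioo 0 T, ∀ x ∈ Set.Ioo a b,
      pt τ t x = px (px τ) t x + (px τ t x) ^ 2 + μ * px (pt u) t x := by
    intro t ht x hx
    have hpde := heq t ht x hx
    have hne := (hpos t x).ne'
    rw [A, B, C]
    have hptθ : pt θ t x = px (px θ) t x + μ * θ t x * px (pt u) t x := by linarith
    rw [hptθ]
    field_simp
    ring
  -- zero time-derivative of u at the boundary
  have hbz : ∀ t ∈ Set.Ioo 0 T, pt u t a = 0 ∧ pt u t b = 0 := by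
    intro t ht
    constructor
    · have he : (fun s => u s a) =ᶠ[nhds t] fun _ => (0 : ℝ) := by
        filter_upwards [Ioo_mem_nhds ht.1 ht.2] with s hs
        exact (hbcu s ⟨hs.1.le, hs.2.le⟩).1
      rw [pt]; simp only [he.deriv_eq, deriv_const]
    · have he : (fun s => u s b) =ᶠ[nhds t] fun _ => (0 : ℝ) := by
        filter_upwards [Ioo_mem_nhds ht.1 ht.2] with s hs
        exact (hbcu s ⟨hs.1.le, hs.2.le⟩).2
      rw [pt]; simp only [he.deriv_eq, deriv_const]
  -- F : integral identity
  have F : ∀ t ∈ Set.Ioo 0 T,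
      (∫ x in a..b, pt τ t x) = ∫ x in a..b, (px τ t x) ^ 2 := by
    intro t ht
    have htT : t ∈ Set.Icc 0 T := ⟨ht.1.le, ht.2.le⟩
    have step1 : (∫ x in a..b, pt τ t x) =
        ∫ x in a..b, (px (px τ) t x + (px τ t x) ^ 2 + μ * px (pt u) t x) := by
      rw [intervalIntegral.integral_of_le hab.le, intervalIntegral.integral_of_le hab.le,
        ← MeasureTheory.setIntegral_congr_set MeasureTheory.Ioo_ae_eq_Ioc,
        ← MeasureTheory.setIntegral_congr_set MeasureTheory.Ioo_ae_eq_Ioc]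
      exact MeasureTheory.setIntegral_congr_fun measurableSet_Ioo fun x hx => D t ht x hx
    have i1 : IntervalIntegrable (fun x => px (px τ) t x) volume a b :=
      (contx _ (contDiff_px (contDiff_px hτs)) t).intervalIntegrable a b
    have i2 : IntervalIntegrable (fun x => (px τ t x) ^ 2) volume a b :=
      ((contx _ (contDiff_px hτs) t).pow 2).intervalIntegrable a b
    have i3 : IntervalIntegrable (fun x => μ * px (pt u) t x) volume a b :=
      (continuous_const.mul (contx _ (contDiff_px (contDiff_pt hu)) t)).intervalIntegrable a b
    have e1 : (∫ x in a..b, px (px τ) t x) = 0 := by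
      have hFTC := intervalIntegral.integral_eq_sub_of_hasDerivAt
        (f := fun y => px τ t y) (f' := fun y => px (px τ) t y)
        (fun x _ => hasDerivAt_px (contDiff_px hτs) t x) i1
      rw [hFTC]
      simp only [B]
      rw [(hbcθ t htT).1, (hbcθ t htT).2]
      simp
    have e3 : (∫ x in a..b, px (pt u) t x) = 0 := by
      have hFTC := intervalIntegral.integral_eq_sub_of_hasDerivAt
        (f := fun y => pt u t y) (f' := fun y => px (pt u) t y)
        (fun x _ => hasDerivAt_px (contDiff_pt hu) t x)
        ((contx _ (contDiff_px (contDiff_pt hu)) t).intervalIntegrable a b)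
      rw [hFTC]
      simp [(hbz t ht).1, (hbz t ht).2]
    rw [step1, intervalIntegral.integral_add (i1.add i2) i3,
      intervalIntegral.integral_add i1 i2, e1,
      intervalIntegral.integral_const_mul, e3]
    ring
  -- G : differentiation under the integral sign
  have G : ∀ t₀ : ℝ, HasDerivAt (fun s => ∫ x in a..b, τ s x)
      (∫ x in a..b, pt τ t₀ x) t₀ := by
    intro t₀
    have hK : IsCompact (Set.Icc (t₀ - 1) (t₀ + 1) ×ˢ Set.uIcc a b) :=
      isCompact_Icc.prod isCompact_uIcc
    obtain ⟨M, hM⟩ := hK.exists_bound_of_continuousOn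
      ((contDiff_pt hτs).continuous.continuousOn)
    refine (intervalIntegral.hasDerivAt_integral_of_dominated_loc_of_deriv_le
      (F := fun s x => τ s x) (F' := fun s x => pt τ s x) (bound := fun _ => M)
      (Metric.ball_mem_nhds t₀ one_pos) ?_ ?_ ?_ ?_ ?_ ?_).2
    · exact Filter.Eventually.of_forall fun s =>
        (contx _ hτs s).aestronglyMeasurable
    · exact (contx _ hτs t₀).intervalIntegrable a b
    · exact (contx _ (contDiff_pt hτs) t₀).aestronglyMeasurable
    · refine Filter.Eventually.of_forall fun x hx s hs => ?_
      refine hM (s, x) ⟨?_, uIoc_subset_uIcc hx⟩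
      rw [Real.ball_eq_Ioo] at hs
      exact ⟨hs.1.le, hs.2.le⟩
    · exact intervalIntegrable_const
    · exact Filter.Eventually.of_forall fun x _ s _ => hasDerivAt_pt hτs s x
  constructor
  · intro t ht
    rw [(G t).deriv]
    exact F t ht
  · have hfn : (fun t => ∫ x in a..b, Real.log (θ t x)) =
        fun t => ∫ x in a..b, τ t x := by simp [hτ]
    rw [hfn]
    have hdiff : Differentiable ℝ (fun t => ∫ x in a..b, τ t x) :=
      fun t => (G t).differentiableAt
    refine monotoneOn_of_deriv_nonneg (convex_Icc 0 T) hdiff.continuous.continuousOn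
      hdiff.differentiableOn ?_
    intro t ht
    rw [interior_Icc] at ht
    rw [(G t).deriv, F t ht]
    exact intervalIntegral.integral_nonneg hab.le fun x _ => sq_nonneg _
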